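/- arXiv:1212.0970 — 3 statements merged into one kernel-verified Lean document; each statement's English description precedes it below -/
import Mathlib

section
/- Let V be a finite-dimensional complex inner product space, a : V × V → ℂ a bounded bilinear form, b : V → ℂ and Q : V → ℂ linear forms. Let u ∈ V satisfy a(u,w) = b(w) for all w ∈ V (primal problem), and let v ∈ V satisfy a(w,v) = Q(w) for all w ∈ V (dual problem). Let û, v̂ ∈ V be arbitrary, and let g ∈ V be the Riesz representative of the primal residual, i.e. ⟪g, w⟫ = a(û,w) − b(w) for all w ∈ V. Then the error in the dual-corrected output satisfies the exact representation Q(u) − ( Q(û) − ⟪g, v̂⟫ ) = −⟪g, v − v̂⟫. -/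
theorem stmt2_general {V : Type*} [NormedAddCommGroup V] [InnerProductSpace ℂ V]
    (a : V →ₗ[ℂ] V →ₗ[ℂ] ℂ) (b Q : V →ₗ[ℂ] ℂ)
    (u : V) (hu : ∀ w : V, a u w = b w)
    (v : V) (hv : ∀ w : V, a w v = Q w)
    (uhat vhat : V) (g : V) (hg : ∀ w : V, (inner ℂ g w : ℂ) = a uhat w - b w) :
    Q u - (Q uhat - (inner ℂ g vhat : ℂ)) = -(inner ℂ g (v - vhat) : ℂ) := by
  -- Testing the primal residual against the dual solution gives the uncorrected output error.
  have output_error : Q u - Q uhat = -(inner ℂ g v : ℂ) := by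
    rw [hg v, ← hv u, ← hv uhat, hu v]
    ring
  rw [inner_sub_right]
  linear_combination output_error

/-- Exact error representation for the dual-corrected output:
if `u` solves the primal problem `a(u,·) = b`, `v` solves the dual problem
`a(·,v) = Q`, and `g` is the Riesz representative of the primal residual
`w ↦ a(uhat,w) − b(w)`, then
`Q(u) − (Q(uhat) − ⟪g, vhat⟫) = −⟪g, v − vhat⟫`. -/
theorem stmt2 {V : Type*} [NormedAddCommGroup V] [InnerProductSpace ℂ V]
    [FiniteDimensional ℂ V]
    (a : V →ₗ[ℂ] V →ₗ[ℂ] ℂ) (b Q : V →ₗ[ℂ] ℂ)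
    (C : ℝ) (hbound : ∀ u v : V, ‖a u v‖ ≤ C * ‖u‖ * ‖v‖)
    (u : V) (hu : ∀ w : V, a u w = b w)
    (v : V) (hv : ∀ w : V, a w v = Q w)
    (uhat vhat : V) (g : V) (hg : ∀ w : V, (inner ℂ g w : ℂ) = a uhat w - b w) :
    Q u - (Q uhat - (inner ℂ g vhat : ℂ)) = -(inner ℂ g (v - vhat) : ℂ) :=
  stmt2_general a b Q u hu v hv uhat vhat g hg
end

section
/- Let V be a finite-dimensional complex inner product space, a : V × V → ℂ a bounded bilinear form, b : V → ℂ and Q : V → ℂ linear forms. Assume there is β^d > 0 such that β^d‖x‖ ≤ sup over nonzero w ∈ V of |a(w,x)|/‖w‖ for all x ∈ V, and let β̃^d satisfy 0 < β̃^d ≤ β^d. Let u ∈ V satisfy a(u,w) = b(w) for all w ∈ V, let v ∈ V satisfy a(w,v) = Q(w) for all w ∈ V, and let û, v̂ ∈ V be arbitrary. Let g ∈ V be the Riesz representative of the primal residual (⟪g, w⟫ = a(û,w) − b(w) for all w) and g^d ∈ V the Riesz representative of the dual residual (⟪g^d, w⟫ = a(w,v̂) − Q(w) for all w). Then |Q(u)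 − ( Q(û) − ⟪g, v̂⟫ )| ≤ (β̃^d)⁻¹ ‖g‖ ‖g^d‖. -/
/-!
The dual correction turns the output error into the primal residual tested against the dual
error: `Q u - (Q û - ⟪g, v̂⟫) = ⟪g, v̂ - v⟫`. Cauchy–Schwarz bounds this by `‖g‖ ‖v̂ - v‖`, and
since `a(w, v̂ - v) = ⟪g^d, w⟫`, adjoint inf-sup stability gives `β^d ‖v̂ - v‖ ≤ ‖g^d‖`.
-/

section

variable {𝕜 V : Type*} [RCLike 𝕜] [NormedAddCommGroup V] [InnerProductSpace 𝕜 V]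
  (a : V →ₗ[𝕜] V →ₗ[𝕜] 𝕜)

theorem iSup_norm_apply_div_norm_le_of_eq_inner {x r : V} (h : ∀ w, a w x = inner 𝕜 r w) :
    ⨆ w : {w : V // w ≠ 0}, ‖a (w : V) x‖ / ‖(w : V)‖ ≤ ‖r‖ := by
  refine Real.iSup_le (fun ⟨w, hw⟩ => ?_) (norm_nonneg _)
  rw [h w, div_le_iff₀ (norm_pos_iff.mpr hw)]
  exact norm_inner_le_norm r w

theorem norm_sub_le_of_adjoint_infSup {Q : V →ₗ[𝕜] 𝕜} {β β' : ℝ} (hβ' : 0 < β') (hle : β' ≤ β)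
    (hinfsup : ∀ x : V, β * ‖x‖ ≤ ⨆ w : {w : V // w ≠ 0}, ‖a (w : V) x‖ / ‖(w : V)‖)
    {v vhat gd : V} (hv : ∀ w, a w v = Q w) (hgd : ∀ w, inner 𝕜 gd w = a w vhat - Q w) :
    ‖vhat - v‖ ≤ β'⁻¹ * ‖gd‖ := by
  have hsup := iSup_norm_apply_div_norm_le_of_eq_inner a (x := vhat - v) (r := gd)
    fun w => by rw [map_sub, hgd w, hv w]
  rw [inv_mul_eq_div, le_div_iff₀ hβ', mul_comm]
  calc β' * ‖vhat - v‖ ≤ β * ‖vhat - v‖ := by gcongr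
    _ ≤ ‖gd‖ := (hinfsup _).trans hsup

theorem output_sub_dualCorrected_eq_inner {b Q : V →ₗ[𝕜] 𝕜} {u v uhat vhat g : V}
    (hu : ∀ w, a u w = b w) (hv : ∀ w, a w v = Q w)
    (hg : ∀ w, inner 𝕜 g w = a uhat w - b w) :
    Q u - (Q uhat - inner 𝕜 g vhat) = inner 𝕜 g (vhat - v) := by
  have hgv : inner 𝕜 g v = Q uhat - Q u := by rw [hg v, hv uhat, ← hu v, hv u]
  rw [inner_sub_right, hgv]
  ring

end

theorem stmt3_general {V : Type*} [NormedAddCommGroup V] [InnerProductSpace ℂ V]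
    (a : V →ₗ[ℂ] V →ₗ[ℂ] ℂ) (b Q : V →ₗ[ℂ] ℂ)
    (βd : ℝ)
    (hinfsup : ∀ x : V, βd * ‖x‖ ≤ ⨆ w : {w : V // w ≠ 0}, ‖a (w : V) x‖ / ‖(w : V)‖)
    (βtd : ℝ) (hβtdpos : 0 < βtd) (hβtdle : βtd ≤ βd)
    (u : V) (hu : ∀ w : V, a u w = b w)
    (v : V) (hv : ∀ w : V, a w v = Q w)
    (uhat vhat : V)
    (g : V) (hg : ∀ w : V, (inner ℂ g w : ℂ) = a uhat w - b w)
    (gd : V) (hgd : ∀ w : V, (inner ℂ gd w : ℂ) = a w vhat - Q w) :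
    ‖Q u - (Q uhat - (inner ℂ g vhat : ℂ))‖ ≤ βtd⁻¹ * ‖g‖ * ‖gd‖ := by
  calc ‖Q u - (Q uhat - (inner ℂ g vhat : ℂ))‖ = ‖(inner ℂ g (vhat - v) : ℂ)‖ := by
        rw [output_sub_dualCorrected_eq_inner a hu hv hg]
    _ ≤ ‖g‖ * ‖vhat - v‖ := norm_inner_le_norm g _
    _ ≤ ‖g‖ * (βtd⁻¹ * ‖gd‖) := by
        gcongr
        exact norm_sub_le_of_adjoint_infSup a hβtdpos hβtdle hinfsup hv hgd
    _ = βtd⁻¹ * ‖g‖ * ‖gd‖ := by ring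

/-- Goal-oriented a posteriori error bound: under adjoint inf-sup stability
with constant `βd ≥ βtd > 0`, the error in the dual-corrected output is
bounded by `(βtd)⁻¹ ‖g‖ ‖gd‖`, where `g` and `gd` are the Riesz
representatives of the primal and dual residuals. -/
theorem stmt3 {V : Type*} [NormedAddCommGroup V] [InnerProductSpace ℂ V]
    [FiniteDimensional ℂ V]
    (a : V →ₗ[ℂ] V →ₗ[ℂ] ℂ) (b Q : V →ₗ[ℂ] ℂ)
    (C : ℝ) (hbound : ∀ u v : V, ‖a u v‖ ≤ C * ‖u‖ * ‖v‖)
    (βd : ℝ) (hβd : 0 < βd)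
    (hinfsup : ∀ x : V, βd * ‖x‖ ≤ ⨆ w : {w : V // w ≠ 0}, ‖a (w : V) x‖ / ‖(w : V)‖)
    (βtd : ℝ) (hβtdpos : 0 < βtd) (hβtdle : βtd ≤ βd)
    (u : V) (hu : ∀ w : V, a u w = b w)
    (v : V) (hv : ∀ w : V, a w v = Q w)
    (uhat vhat : V)
    (g : V) (hg : ∀ w : V, (inner ℂ g w : ℂ) = a uhat w - b w)
    (gd : V) (hgd : ∀ w : V, (inner ℂ gd w : ℂ) = a w vhat - Q w) :
    ‖Q u - (Q uhat - (inner ℂ g vhat : ℂ))‖ ≤ βtd⁻¹ * ‖g‖ * ‖gd‖ :=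
  stmt3_general a b Q βd hinfsup βtd hβtdpos hβtdle u hu v hv uhat vhat g hg gd hgd
end

section
/- Let W be a vector space over a field, let k ≥ 1, and let I₁, …, I_k : W → W be linear maps satisfying I_i ∘ I_{i−1} = I_{i−1} for every i with 2 ≤ i ≤ k. Then the stabilized residual operator equals the classical residual operator: (id − I_k) ∘ (id − I_{k−1}) ∘ ⋯ ∘ (id − I₁) = id − I_k. (This shows that, in exact arithmetic, the stabilized EIM residual δ^k_stab, obtained by successively applying the intermediate residual operators id − I₁, …, id − I_k, coincides with the classical EIM residual δ^k = id − I^k.) -/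
/-- The stabilized EIM residual: successively apply the intermediate residual
operators `id − I₁`, …, `id − I_k` (from right to left, `I` being indexed from
`1`). -/
def stabResidual {K : Type*} [Field K] {W : Type*} [AddCommGroup W] [Module K W]
    (I : ℕ → W →ₗ[K] W) : ℕ → W →ₗ[K] W
  | 0 => LinearMap.id
  | n + 1 => (LinearMap.id - I (n + 1)) ∘ₗ stabResidual I n

/-- In exact arithmetic, the stabilized EIM residual coincides with the
classical one: if `I_i ∘ I_{i−1} = I_{i−1}` for `2 ≤ i ≤ k`, then
`(id − I_k) ∘ ⋯ ∘ (id − I₁) = id − I_k`. -/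
theorem stmt12 {K : Type*} [Field K] {W : Type*} [AddCommGroup W] [Module K W]
    (k : ℕ) (hk : 1 ≤ k) (I : ℕ → W →ₗ[K] W)
    (hcomp : ∀ i, 2 ≤ i → i ≤ k → I i ∘ₗ I (i - 1) = I (i - 1)) :
    stabResidual I k = LinearMap.id - I k := by
  induction k with
  | zero => omega
  | succ n ih =>
    rcases Nat.eq_or_lt_of_le hk with h | h
    · obtain rfl : n = 0 := by omega
      simp [stabResidual]
    · have hn : 1 ≤ n := by omega
      have ih' := ih hn (fun i h2 hle => hcomp i h2 (by omega))
      have hc := hcomp (n + 1) (by omega) (le_refl _)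
      simp only [Nat.add_sub_cancel] at hc
      simp only [stabResidual, ih']
      ext w
      simp only [LinearMap.comp_apply, LinearMap.sub_apply, LinearMap.id_apply,
        map_sub]
      have : I (n + 1) (I n w) = I n w := by
        have := congrArg (fun f => f w) hc
        simpa using this
      rw [this]
      abel
end
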